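/- Suppose ‖f‖_r ≤ C_S(‖∇f‖₂ + ‖f‖₂)^θ ‖f‖_s^{1-θ} holds for all f ∈ H¹(Ω) ∩ Lˢ(Ω), with 0 < s ≤ 2 and θ ∈ (0,1). Then there exists a constant C_S' > 0 (depending only on C_S, s, θ) such that ‖f‖_r ≤ C_S'(‖∇f‖₂ + ‖f‖_s)^θ ‖f‖_s^{1-θ} for all f ∈ H¹(Ω) ∩ Lˢ(Ω). -/

import Mathlib

/-
Since `s ≤ 2 ≤ r`, Hölder's inequality gives the interpolation
`‖f‖₂ ≤ ‖f‖_s ^ α * ‖f‖_r ^ (1 - α) ≤ ‖f‖_s + ‖f‖_r`. Inserting this into the hypothesis and using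
subadditivity of `t ↦ t ^ θ` bounds `‖f‖_r` by `C_S (‖∇f‖₂ + ‖f‖_s) ^ θ ‖f‖_s ^ (1 - θ)` plus
`C_S ‖f‖_r ^ θ ‖f‖_s ^ (1 - θ)`. By Young's inequality with a small parameter the latter is at most
`‖f‖_r / 2 + K ‖f‖_s`; the term `‖f‖_r / 2` is absorbed into the left-hand side, and
`‖f‖_s ≤ (‖∇f‖₂ + ‖f‖_s) ^ θ ‖f‖_s ^ (1 - θ)`.
-/

open Real Set MeasureTheory

noncomputable def lpNormOn {N : ℕ} (Ω : Set (EuclideanSpace ℝ (Fin N))) (p : ℝ)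
    (f : EuclideanSpace ℝ (Fin N) → ℝ) : ℝ :=
  (∫ x in Ω, |f x| ^ p) ^ (1 / p)

noncomputable def gradNormOn {N : ℕ} (Ω : Set (EuclideanSpace ℝ (Fin N)))
    (f : EuclideanSpace ℝ (Fin N) → ℝ) : ℝ :=
  (∫ x in Ω, ‖fderiv ℝ f x‖ ^ (2:ℝ)) ^ ((1:ℝ) / 2)

/-- Membership in (our model of) `H¹(Ω) ∩ Lˢ(Ω)`. -/
def MemH1LsOn {N : ℕ} (Ω : Set (EuclideanSpace ℝ (Fin N))) (s : ℝ)
    (f : EuclideanSpace ℝ (Fin N) → ℝ) : Prop :=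
  Differentiable ℝ f ∧ IntegrableOn f Ω volume ∧
    IntegrableOn (fun x => (f x) ^ (2:ℝ)) Ω volume ∧
    IntegrableOn (fun x => ‖fderiv ℝ f x‖ ^ (2:ℝ)) Ω volume ∧
    IntegrableOn (fun x => |f x| ^ s) Ω volume

theorem integral_rpow_mul_rpow_le {α : Type*} [MeasurableSpace α] {μ : Measure α}
    {u v : α → ℝ} (hu : 0 ≤ u) (hv : 0 ≤ v) (hui : Integrable u μ) (hvi : Integrable v μ)
    {a b : ℝ} (ha : 0 ≤ a) (hb : 0 ≤ b) (hab : a + b = 1) :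
    ∫ x, u x ^ a * v x ^ b ∂μ ≤ (∫ x, u x ∂μ) ^ a * (∫ x, v x ∂μ) ^ b := by
  have hIu : 0 ≤ ∫ x, u x ∂μ := integral_nonneg hu
  have hIv : 0 ≤ ∫ x, v x ∂μ := integral_nonneg hv
  have hprod : ∀ x, 0 ≤ u x ^ a * v x ^ b := fun x =>
    mul_nonneg (rpow_nonneg (hu x) _) (rpow_nonneg (hv x) _)
  have hrhs : 0 ≤ (∫ x, u x ∂μ) ^ a * (∫ x, v x ∂μ) ^ b := by positivity
  rw [← ENNReal.ofReal_le_ofReal_iff hrhs]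
  calc ENNReal.ofReal (∫ x, u x ^ a * v x ^ b ∂μ)
      ≤ ∫⁻ x, ENNReal.ofReal (u x ^ a * v x ^ b) ∂μ := by
        rw [← Real.enorm_of_nonneg (integral_nonneg hprod)]
        refine (enorm_integral_le_lintegral_enorm _).trans_eq (lintegral_congr fun x => ?_)
        exact Real.enorm_of_nonneg (hprod x)
    _ = ∫⁻ x, ENNReal.ofReal (u x) ^ a * ENNReal.ofReal (v x) ^ b ∂μ := by
        refine lintegral_congr fun x => ?_
        rw [ENNReal.ofReal_mul (rpow_nonneg (hu x) _), ENNReal.ofReal_rpow_of_nonneg (hu x) ha,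
          ENNReal.ofReal_rpow_of_nonneg (hv x) hb]
    _ ≤ (∫⁻ x, ENNReal.ofReal (u x) ∂μ) ^ a * (∫⁻ x, ENNReal.ofReal (v x) ∂μ) ^ b :=
        ENNReal.lintegral_mul_norm_pow_le hui.aemeasurable.ennreal_ofReal
          hvi.aemeasurable.ennreal_ofReal ha hb hab
    _ = ENNReal.ofReal ((∫ x, u x ∂μ) ^ a * (∫ x, v x ∂μ) ^ b) := by
        rw [← ofReal_integral_eq_lintegral_ofReal hui (ae_of_all _ hu),
          ← ofReal_integral_eq_lintegral_ofReal hvi (ae_of_all _ hv),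
          ENNReal.ofReal_rpow_of_nonneg hIu ha, ENNReal.ofReal_rpow_of_nonneg hIv hb,
          ENNReal.ofReal_mul (rpow_nonneg hIu _)]

theorem rpow_mul_rpow_le_add {x y a b : ℝ} (hx : 0 ≤ x) (hy : 0 ≤ y) (ha : 0 ≤ a) (hb : 0 ≤ b)
    (hab : a + b = 1) : x ^ a * y ^ b ≤ x + y := by
  have := geom_mean_le_arith_mean2_weighted ha hb hx hy hab
  nlinarith

section Interpolation

variable {α : Type*} [MeasurableSpace α] {μ : Measure α} {g : α → ℝ} {s p r : ℝ}

theorem integral_rpow_le_rpow_mul_rpow (hg : 0 ≤ g) (hs : 0 ≤ s) (hsp : s ≤ p) (hpr : p ≤ r)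
    (hsr : s < r) (hgs : Integrable (fun x => g x ^ s) μ) (hgr : Integrable (fun x => g x ^ r) μ) :
    ∫ x, g x ^ p ∂μ ≤
      (∫ x, g x ^ s ∂μ) ^ ((r - p) / (r - s)) * (∫ x, g x ^ r ∂μ) ^ ((p - s) / (r - s)) := by
  have hrs : 0 < r - s := sub_pos.mpr hsr
  have hlow : 0 ≤ (r - p) / (r - s) := div_nonneg (by linarith) hrs.le
  have hhigh : 0 ≤ (p - s) / (r - s) := div_nonneg (by linarith) hrs.le
  have hsplit : ∀ x,
      g x ^ p = (g x ^ s) ^ ((r - p) / (r - s)) * (g x ^ r) ^ ((p - s) / (r - s)) := by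
    intro x
    rw [← rpow_mul (hg x), ← rpow_mul (hg x),
      ← rpow_add_of_nonneg (hg x) (mul_nonneg hs hlow) (mul_nonneg (by linarith) hhigh)]
    congr 1
    field_simp
    ring
  simp_rw [hsplit]
  exact integral_rpow_mul_rpow_le (fun x => rpow_nonneg (hg x) _) (fun x => rpow_nonneg (hg x) _)
    hgs hgr hlow hhigh (by field_simp; ring)

theorem integral_rpow_rpow_inv_le_add (hg : 0 ≤ g) (hs : 0 < s) (hsp : s ≤ p) (hpr : p ≤ r)
    (hgs : Integrable (fun x => g x ^ s) μ) (hgr : Integrable (fun x => g x ^ r) μ) :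
    (∫ x, g x ^ p ∂μ) ^ (1 / p) ≤ (∫ x, g x ^ s ∂μ) ^ (1 / s) + (∫ x, g x ^ r ∂μ) ^ (1 / r) := by
  set Is := ∫ x, g x ^ s ∂μ
  set Ir := ∫ x, g x ^ r ∂μ
  have hIs : 0 ≤ Is := integral_nonneg fun x => rpow_nonneg (hg x) _
  have hIr : 0 ≤ Ir := integral_nonneg fun x => rpow_nonneg (hg x) _
  rcases (hsp.trans hpr).eq_or_lt with hsr | hsr
  · obtain rfl : s = p := le_antisymm hsp (hsr ▸ hpr)
    exact le_add_of_nonneg_right (rpow_nonneg hIr _)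
  have hp : 0 < p := hs.trans_le hsp
  have hrs : 0 < r - s := sub_pos.mpr hsr
  calc (∫ x, g x ^ p ∂μ) ^ (1 / p)
      ≤ (Is ^ ((r - p) / (r - s)) * Ir ^ ((p - s) / (r - s))) ^ (1 / p) :=
        rpow_le_rpow (integral_nonneg fun x => rpow_nonneg (hg x) _)
          (integral_rpow_le_rpow_mul_rpow hg hs.le hsp hpr hsr hgs hgr) (by positivity)
    _ = (Is ^ (1 / s)) ^ (s * (r - p) / (p * (r - s))) *
          (Ir ^ (1 / r)) ^ (r * (p - s) / (p * (r - s))) := by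
        rw [mul_rpow (rpow_nonneg hIs _) (rpow_nonneg hIr _), ← rpow_mul hIs, ← rpow_mul hIr,
          ← rpow_mul hIs, ← rpow_mul hIr]
        congr 2 <;> field_simp [(hs.trans hsr).ne']
    _ ≤ Is ^ (1 / s) + Ir ^ (1 / r) :=
        rpow_mul_rpow_le_add (rpow_nonneg hIs _) (rpow_nonneg hIr _)
          (div_nonneg (mul_nonneg hs.le (by linarith)) (by positivity))
          (div_nonneg (mul_nonneg (by linarith) (by linarith)) (by positivity))
          (by field_simp; ring)

end Interpolation

theorem exists_rpow_mul_rpow_le_mul_add_mul {θ ε : ℝ} (hθ0 : 0 < θ) (hθ1 : θ < 1) (hε : 0 < ε) :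
    ∃ K, 0 ≤ K ∧ ∀ x y : ℝ, 0 ≤ x → 0 ≤ y → x ^ θ * y ^ (1 - θ) ≤ ε * x + K * y := by
  set η := ε / θ
  have hη : 0 < η := div_pos hε hθ0
  set δ := η ^ (-(θ / (1 - θ)))
  have hδ : 0 < δ := rpow_pos_of_pos hη _
  have hηδ : η ^ θ * δ ^ (1 - θ) = 1 := by
    rw [← rpow_mul hη.le, ← rpow_add hη,
      show θ + -(θ / (1 - θ)) * (1 - θ) = 0 by field_simp [(sub_pos.mpr hθ1).ne']; ring, rpow_zero]
  refine ⟨(1 - θ) * δ, mul_nonneg (by linarith) hδ.le, fun x y hx hy => ?_⟩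
  calc x ^ θ * y ^ (1 - θ) = (η * x) ^ θ * (δ * y) ^ (1 - θ) := by
        rw [mul_rpow hη.le hx, mul_rpow hδ.le hy, mul_mul_mul_comm, hηδ, one_mul]
    _ ≤ θ * (η * x) + (1 - θ) * (δ * y) :=
        geom_mean_le_arith_mean2_weighted hθ0.le (by linarith) (by positivity) (by positivity)
          (by ring)
    _ = ε * x + (1 - θ) * δ * y := by
        simp only [η]; field_simp

theorem exists_le_mul_add_rpow_mul_rpow_of_le_add {θ c : ℝ} (hθ0 : 0 < θ) (hθ1 : θ < 1)
    (hc : 0 < c) :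
    ∃ C, 0 < C ∧ ∀ G B R T : ℝ, 0 ≤ G → 0 ≤ B → 0 ≤ R → 0 ≤ T → T ≤ B + R →
      R ≤ c * (G + T) ^ θ * B ^ (1 - θ) → R ≤ C * (G + B) ^ θ * B ^ (1 - θ) := by
  obtain ⟨K, hK, hyoung⟩ :=
    exists_rpow_mul_rpow_le_mul_add_mul hθ0 hθ1 (by positivity : 0 < 1 / (2 * c))
  refine ⟨2 * c * (1 + K), by positivity, fun G B R T hG hB hR hT hTBR hRT => ?_⟩
  have hB_le : B ≤ (G + B) ^ θ * B ^ (1 - θ) :=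
    calc B = B ^ θ * B ^ (1 - θ) := by rw [← rpow_add' hB (by norm_num), add_sub_cancel, rpow_one]
      _ ≤ (G + B) ^ θ * B ^ (1 - θ) := by gcongr; linarith
  have hGT : (G + T) ^ θ ≤ (G + B) ^ θ + R ^ θ :=
    calc (G + T) ^ θ ≤ ((G + B) + R) ^ θ := rpow_le_rpow (by positivity) (by linarith) hθ0.le
      _ ≤ (G + B) ^ θ + R ^ θ := rpow_add_le_add_rpow (by positivity) hR hθ0.le hθ1.le
  set X := (G + B) ^ θ * B ^ (1 - θ)
  have hyoung_R : c * (R ^ θ * B ^ (1 - θ)) ≤ R / 2 + c * K * B :=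
    calc c * (R ^ θ * B ^ (1 - θ)) ≤ c * (1 / (2 * c) * R + K * B) := by
          gcongr; exact hyoung R B hR hB
      _ = R / 2 + c * K * B := by field_simp
  have hR_le : R ≤ c * X + (R / 2 + c * K * B) :=
    calc R ≤ c * (G + T) ^ θ * B ^ (1 - θ) := hRT
      _ ≤ c * ((G + B) ^ θ + R ^ θ) * B ^ (1 - θ) := by gcongr
      _ = c * X + c * (R ^ θ * B ^ (1 - θ)) := by ring
      _ ≤ c * X + (R / 2 + c * K * B) := by gcongr
  have hKB : c * K * B ≤ c * K * X := mul_le_mul_of_nonneg_left hB_le (by positivity)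
  rw [mul_assoc]
  linarith

theorem lpNormOn_nonneg {N : ℕ} (Ω : Set (EuclideanSpace ℝ (Fin N))) (p : ℝ)
    (f : EuclideanSpace ℝ (Fin N) → ℝ) : 0 ≤ lpNormOn Ω p f :=
  rpow_nonneg (integral_nonneg fun _ => rpow_nonneg (abs_nonneg _) _) _

theorem gradNormOn_nonneg {N : ℕ} (Ω : Set (EuclideanSpace ℝ (Fin N)))
    (f : EuclideanSpace ℝ (Fin N) → ℝ) : 0 ≤ gradNormOn Ω f :=
  rpow_nonneg (integral_nonneg fun _ => rpow_nonneg (norm_nonneg _) _) _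

theorem lpNormOn_eq_zero_of_not_integrableOn {N : ℕ} {Ω : Set (EuclideanSpace ℝ (Fin N))} {p : ℝ}
    {f : EuclideanSpace ℝ (Fin N) → ℝ} (hp : p ≠ 0)
    (hf : ¬ IntegrableOn (fun x => |f x| ^ p) Ω volume) : lpNormOn Ω p f = 0 := by
  rw [lpNormOn, integral_undef hf, zero_rpow (one_div_ne_zero hp)]

theorem lpNormOn_le_add {N : ℕ} {Ω : Set (EuclideanSpace ℝ (Fin N))} {s p r : ℝ}
    {f : EuclideanSpace ℝ (Fin N) → ℝ} (hs : 0 < s) (hsp : s ≤ p) (hpr : p ≤ r)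
    (hfs : IntegrableOn (fun x => |f x| ^ s) Ω volume)
    (hfr : IntegrableOn (fun x => |f x| ^ r) Ω volume) :
    lpNormOn Ω p f ≤ lpNormOn Ω s f + lpNormOn Ω r f :=
  integral_rpow_rpow_inv_le_add (fun x => abs_nonneg (f x)) hs hsp hpr hfs hfr

theorem GNS_with_Ls_norm_on_rhs_general {N : ℕ}
    (Ω : Set (EuclideanSpace ℝ (Fin N)))
    (CS r s θ : ℝ) (hCS : 0 < CS) (hs0 : 0 < s) (hs2 : s ≤ 2) (hr : 2 ≤ r)
    (hθ0 : 0 < θ) (hθ1 : θ < 1)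
    (hGNS : ∀ f : EuclideanSpace ℝ (Fin N) → ℝ, MemH1LsOn Ω s f →
      lpNormOn Ω r f ≤ CS * (gradNormOn Ω f + lpNormOn Ω 2 f) ^ θ * (lpNormOn Ω s f) ^ (1 - θ)) :
    ∃ CS' : ℝ, 0 < CS' ∧
      ∀ f : EuclideanSpace ℝ (Fin N) → ℝ, MemH1LsOn Ω s f →
        lpNormOn Ω r f ≤ CS' * (gradNormOn Ω f + lpNormOn Ω s f) ^ θ * (lpNormOn Ω s f) ^ (1 - θ) := by
  obtain ⟨C, hC, habsorb⟩ := exists_le_mul_add_rpow_mul_rpow_of_le_add hθ0 hθ1 hCS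
  refine ⟨C, hC, fun f hf => ?_⟩
  have hG := gradNormOn_nonneg Ω f
  have hB := lpNormOn_nonneg Ω s f
  by_cases hfr : IntegrableOn (fun x => |f x| ^ r) Ω volume
  · exact habsorb _ _ _ _ hG hB (lpNormOn_nonneg Ω r f) (lpNormOn_nonneg Ω 2 f)
      (lpNormOn_le_add hs0 hs2 hr hf.2.2.2.2 hfr) (hGNS f hf)
  · rw [lpNormOn_eq_zero_of_not_integrableOn (by linarith) hfr]
    exact mul_nonneg (mul_nonneg hC.le (rpow_nonneg (add_nonneg hG hB) _)) (rpow_nonneg hB _)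

theorem GNS_with_Ls_norm_on_rhs {N : ℕ}
    (Ω : Set (EuclideanSpace ℝ (Fin N))) (hΩmeas : MeasurableSet Ω)
    (CS r s θ : ℝ) (hCS : 0 < CS) (hs0 : 0 < s) (hs2 : s ≤ 2) (hr : 2 ≤ r)
    (hθ0 : 0 < θ) (hθ1 : θ < 1)
    (hGNS : ∀ f : EuclideanSpace ℝ (Fin N) → ℝ, MemH1LsOn Ω s f →
      lpNormOn Ω r f ≤ CS * (gradNormOn Ω f + lpNormOn Ω 2 f) ^ θ * (lpNormOn Ω s f) ^ (1 - θ)) :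
    ∃ CS' : ℝ, 0 < CS' ∧
      ∀ f : EuclideanSpace ℝ (Fin N) → ℝ, MemH1LsOn Ω s f →
        lpNormOn Ω r f ≤ CS' * (gradNormOn Ω f + lpNormOn Ω s f) ^ θ * (lpNormOn Ω s f) ^ (1 - θ) :=
  GNS_with_Ls_norm_on_rhs_general Ω CS r s θ hCS hs0 hs2 hr hθ0 hθ1 hGNS
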